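/- Let y₁, y₂, y₃ : {0,...,L} → [0,1] be nondecreasing with yᵢ(0) = 0, satisfying the level-wise triangle inequalities (as in the LP). Let α ∈ (0,1/2], let ℓ₃ < min(ℓ₁, ℓ₂) be levels, and suppose Δyᵢ(ℓᵢ) > 1 - α for i = 1,2,3 (all three edges deterministic with the third edge's dominant level strictly smaller). Then y₁(ℓ₁ - 1) + y₂(ℓ₂ - 1) > 1 - α. In particular, if c₁ ≥ y₁(ℓ₁-1) and c₂ ≥ y₂(ℓ₂-1) are the LP costs of edges 1 and 2, then c₁ + c₂ > 1 - α. -/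
import Mathlib



lemma mono_aux (L : ℕ) (y : ℕ → ℝ) (hm : ∀ ℓ ∈ Finset.Icc 1 L, y (ℓ - 1) ≤ y ℓ)
    {a b : ℕ} (hab : a ≤ b) (hb : b ≤ L) : y a ≤ y b := by
  induction b with
  | zero => simp_all
  | succ n ih =>
    rcases Nat.lt_or_ge a (n+1) with h | h
    · exact le_trans (ih (Nat.lt_succ_iff.mp h) (le_trans (Nat.le_succ n) hb))
        (by simpa using hm (n+1) (Finset.mem_Icc.mpr ⟨Nat.succ_le_succ (Nat.zero_le n), hb⟩))
    · have : a = n+1 := le_antisymm hab h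
      simp [this]

/-- in a (d,d,d)-triangle with the third edge's dominant level strictly
smaller, `y₁(ℓ₁-1) + y₂(ℓ₂-1) > 1 - α`; in particular the LP costs satisfy
`c₁ + c₂ > 1 - α`. -/
theorem stmt_10 (L : ℕ) (y₁ y₂ y₃ : ℕ → ℝ) (α : ℝ) (hα0 : 0 < α) (hα : α ≤ 1 / 2)
    (h₁0 : y₁ 0 = 0) (h₂0 : y₂ 0 = 0) (h₃0 : y₃ 0 = 0)
    (hr₁ : ∀ ℓ ≤ L, 0 ≤ y₁ ℓ ∧ y₁ ℓ ≤ 1)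
    (hr₂ : ∀ ℓ ≤ L, 0 ≤ y₂ ℓ ∧ y₂ ℓ ≤ 1)
    (hr₃ : ∀ ℓ ≤ L, 0 ≤ y₃ ℓ ∧ y₃ ℓ ≤ 1)
    (hm₁ : ∀ ℓ ∈ Finset.Icc 1 L, y₁ (ℓ - 1) ≤ y₁ ℓ)
    (hm₂ : ∀ ℓ ∈ Finset.Icc 1 L, y₂ (ℓ - 1) ≤ y₂ ℓ)
    (hm₃ : ∀ ℓ ∈ Finset.Icc 1 L, y₃ (ℓ - 1) ≤ y₃ ℓ)
    (htri₁ : ∀ ℓ ≤ L, y₁ ℓ ≤ y₂ ℓ + y₃ ℓ)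
    (htri₂ : ∀ ℓ ≤ L, y₂ ℓ ≤ y₁ ℓ + y₃ ℓ)
    (htri₃ : ∀ ℓ ≤ L, y₃ ℓ ≤ y₁ ℓ + y₂ ℓ)
    (ℓ₁ ℓ₂ ℓ₃ : ℕ)
    (hℓ₁ : ℓ₁ ∈ Finset.Icc 1 L) (hℓ₂ : ℓ₂ ∈ Finset.Icc 1 L) (hℓ₃ : ℓ₃ ∈ Finset.Icc 1 L)
    (h31 : ℓ₃ < ℓ₁) (h32 : ℓ₃ < ℓ₂)
    (hd₁ : y₁ ℓ₁ - y₁ (ℓ₁ - 1) > 1 - α)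
    (hd₂ : y₂ ℓ₂ - y₂ (ℓ₂ - 1) > 1 - α)
    (hd₃ : y₃ ℓ₃ - y₃ (ℓ₃ - 1) > 1 - α) :
    y₁ (ℓ₁ - 1) + y₂ (ℓ₂ - 1) > 1 - α ∧
      ∀ c₁ c₂ : ℝ, y₁ (ℓ₁ - 1) ≤ c₁ → y₂ (ℓ₂ - 1) ≤ c₂ → c₁ + c₂ > 1 - α := by
  obtain ⟨h1lo, h1hi⟩ := Finset.mem_Icc.mp hℓ₁
  obtain ⟨h2lo, h2hi⟩ := Finset.mem_Icc.mp hℓ₂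
  obtain ⟨h3lo, h3hi⟩ := Finset.mem_Icc.mp hℓ₃
  have ha : ℓ₃ ≤ ℓ₁ - 1 := Nat.le_sub_one_of_lt h31
  have hb : ℓ₃ ≤ ℓ₂ - 1 := Nat.le_sub_one_of_lt h32
  have hy1 : y₁ ℓ₃ ≤ y₁ (ℓ₁ - 1) := mono_aux L y₁ hm₁ ha (le_trans (Nat.sub_le _ _) h1hi)
  have hy2 : y₂ ℓ₃ ≤ y₂ (ℓ₂ - 1) := mono_aux L y₂ hm₂ hb (le_trans (Nat.sub_le _ _) h2hi)
  have htri := htri₃ ℓ₃ h3hi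
  have h3prev : 0 ≤ y₃ (ℓ₃ - 1) := (hr₃ (ℓ₃ - 1) (le_trans (Nat.sub_le _ _) h3hi)).1
  have key : y₁ (ℓ₁ - 1) + y₂ (ℓ₂ - 1) > 1 - α := by linarith
  exact ⟨key, fun c₁ c₂ hc₁ hc₂ => by linarith⟩
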